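/- arXiv:math/0203072 — 2 statements merged into one kernel-verified Lean document; each statement's English description precedes it below -/
import Mathlib

section
/- Let $\mu_1,\ldots,\mu_n$ be shift-invariant measures on a subshift $X$ all projecting under a 1-block factor map $\pi$ to the same measure $\nu$ on a subshift $Y$, and let $\hat\mu = \mu_1 \otimes_\nu \cdots \otimes_\nu \mu_n$ be their relatively independent joining on $X^n$. Suppose $b$ is a symbol of $Y$ with $\nu[b] > 0$ whose preimage consists of $N < n$ symbols of $X$. Then there exist indices $i \neq j$ such that $\hat\mu\{\hat{x} \in X^n : (p_i\hat{x})_0 = (p_j\hat{x})_0\} > 0$, and consequently $(\mu_i \otimes_\nu \mu_j)\{(u,v) : u_0 = v_0\} > 0$. -/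
/-!
Consider the cylinder of tuples all of whose zeroth coordinates lie over `b`. Its sides are
measurable with respect to the factor, so they are their own conditional expectations, and
the defining property of the relatively independent joining gives the cylinder measure
`ν[b] > 0`. On the cylinder the `n` zeroth coordinates take values among the `N < n` preimages
of `b`, so two of them coincide; by countable subadditivity one pair `i ≠ j` does so on a set
of positive measure.
-/

open MeasureTheory

noncomputable section

def shift {A : Type*} : (ℤ → A) → (ℤ → A) := fun x n => x (n + 1)

def IsRelIndepJoining {ι α β : Type*} [Fintype ι] [MeasurableSpace α] [MeasurableSpace β]
    (π : α → β) (μ : ι → Measure α) (ν : Measure β) (μhat : Measure (ι → α)) : Prop :=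
  ∀ As : ι → Set α, (∀ i, MeasurableSet (As i)) →
    ∀ g : ι → (β → ℝ), (∀ i, Measurable (g i)) →
      (∀ i, (fun x => g i (π x)) =ᵐ[μ i]
        (μ i)[(As i).indicator (fun _ => (1 : ℝ))| MeasurableSpace.comap π inferInstance]) →
      μhat (Set.univ.pi As) = ENNReal.ofReal (∫ y, ∏ i, g i y ∂ν)

theorem condExp_indicator_preimage_comap {α β : Type*} {mα : MeasurableSpace α}
    [mβ : MeasurableSpace β] {π : α → β} (hπ : Measurable π) (μ : Measure α) [IsFiniteMeasure μ]
    {s : Set β} (hs : MeasurableSet s) :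
    μ[(π ⁻¹' s).indicator (fun _ => (1 : ℝ))| MeasurableSpace.comap π mβ] =
      fun x => s.indicator (fun _ => (1 : ℝ)) (π x) := by
  rw [condExp_of_stronglyMeasurable hπ.comap_le
    (stronglyMeasurable_const.indicator ⟨s, hs, rfl⟩)
    ((integrable_const (1 : ℝ)).indicator (hπ hs))]
  exact funext fun x => Set.indicator_comp_right (g := fun _ => (1 : ℝ)) π

namespace IsRelIndepJoining

variable {ι α β : Type*} [Fintype ι] [Nonempty ι] [MeasurableSpace α] [MeasurableSpace β]
  {π : α → β} {μ : ι → Measure α} {ν : Measure β} {μhat : Measure (ι → α)}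

theorem measure_pi_preimage (h : IsRelIndepJoining π μ ν μhat) (hπ : Measurable π)
    [∀ i, IsFiniteMeasure (μ i)] [IsFiniteMeasure ν] {s : Set β} (hs : MeasurableSet s) :
    μhat (Set.univ.pi fun _ => π ⁻¹' s) = ν s := by
  have hprod : (fun y => ∏ _i : ι, s.indicator (fun _ => (1 : ℝ)) y) = s.indicator 1 := by
    funext y
    by_cases hy : y ∈ s <;> simp [hy]
  rw [h _ (fun _ => hπ hs) (fun _ => s.indicator fun _ => 1)
      (fun _ => measurable_const.indicator hs)
      (fun i => (condExp_indicator_preimage_comap hπ (μ i) hs).symm.eventuallyEq),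
    hprod, integral_indicator_one hs, measureReal_def, ENNReal.ofReal_toReal (measure_ne_top ν s)]

end IsRelIndepJoining

theorem exists_ne_apply_eq_of_card_fiber_lt {ι A B : Type*} [Finite A] {φ : A → B} {b : B}
    {f : ι → A} (hf : ∀ i, φ (f i) = b) (hcard : Nat.card {a // φ a = b} < Nat.card ι) :
    ∃ i j, i ≠ j ∧ f i = f j := by
  by_contra! hinj
  refine hcard.not_ge (Nat.card_le_card_of_injective (fun i => ⟨f i, hf i⟩) fun i j hij => ?_)
  by_contra hne
  exact hinj i j hne (congrArg Subtype.val hij)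

theorem exists_measure_ne_zero_of_forall_exists {ι α : Type*} [Countable ι]
    [MeasurableSpace α] {μ : Measure α} {s : Set α} {P : ι → ι → Prop} {t : ι → ι → Set α}
    (hs : μ s ≠ 0) (hcover : ∀ x ∈ s, ∃ i j, P i j ∧ x ∈ t i j) :
    ∃ i j, P i j ∧ μ (t i j) ≠ 0 := by
  by_contra! hnull
  refine hs (measure_mono_null (t := ⋃ i, ⋃ j, ⋃ (_ : P i j), t i j) ?_ ?_)
  · intro x hx
    obtain ⟨i, j, hij, hx⟩ := hcover x hx
    exact Set.mem_iUnion₂.2 ⟨i, j, Set.mem_iUnion.2 ⟨hij, hx⟩⟩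
  · simpa only [measure_iUnion_null_iff] using hnull

theorem stmt9_general {A B : Type*} [Fintype A]
    [MeasurableSpace A] [MeasurableSingletonClass A]
    [MeasurableSpace B] [MeasurableSingletonClass B]
    (φ : A → B)
    (n : ℕ) (μ : Fin n → Measure (ℤ → A)) [∀ i, IsProbabilityMeasure (μ i)]
    (ν : Measure (ℤ → B)) [IsProbabilityMeasure ν]
    -- μhat is the relatively independent joining μ1 ⊗_ν ⋯ ⊗_ν μn on X^n:
    (μhat : Measure (Fin n → (ℤ → A)))
    (hjoin : ∀ As : Fin n → Set (ℤ → A), (∀ i, MeasurableSet (As i)) →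
      ∀ g : Fin n → ((ℤ → B) → ℝ), (∀ i, Measurable (g i)) →
        (∀ i, (fun x => g i (φ ∘ x)) =ᵐ[μ i]
          (μ i)[(As i).indicator (fun _ => (1 : ℝ))|
            MeasurableSpace.comap (fun x : ℤ → A => φ ∘ x) inferInstance]) →
        μhat (Set.univ.pi As) = ENNReal.ofReal (∫ y, ∏ i, g i y ∂ν))
    (b : B) (hb : ν {y | y 0 = b} ≠ 0)
    (hN : Nat.card {a : A // φ a = b} < n) :
    ∃ i j : Fin n, i ≠ j ∧
      0 < μhat {xhat : Fin n → (ℤ → A) | xhat i 0 = xhat j 0} ∧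
      0 < (μhat.map (fun xhat : Fin n → (ℤ → A) => (xhat i, xhat j)))
          {p : (ℤ → A) × (ℤ → A) | p.1 0 = p.2 0} := by
  have : NeZero n := ⟨by omega⟩
  have hπ : Measurable fun x : ℤ → A => φ ∘ x :=
    measurable_pi_lambda _ fun k => (measurable_of_countable φ).comp (measurable_pi_apply k)
  have hcyl := IsRelIndepJoining.measure_pi_preimage hjoin hπ
    (measurable_pi_apply 0 (measurableSet_singleton b))
  obtain ⟨i, j, hij, hpos⟩ := exists_measure_ne_zero_of_forall_exists (hcyl.trans_ne hb)
    fun xhat hx => exists_ne_apply_eq_of_card_fiber_lt (f := fun i => xhat i 0)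
      (fun i => hx i (Set.mem_univ i)) (by rwa [Nat.card_fin])
  refine ⟨i, j, hij, pos_iff_ne_zero.2 hpos, lt_of_lt_of_le (pos_iff_ne_zero.2 hpos) ?_⟩
  exact Measure.le_map_apply
    ((measurable_pi_apply i).prodMk (measurable_pi_apply j)).aemeasurable _

theorem stmt9 {A B : Type*} [Fintype A] [Fintype B]
    [MeasurableSpace A] [MeasurableSingletonClass A]
    [MeasurableSpace B] [MeasurableSingletonClass B]
    (X : Set (ℤ → A)) (hX : shift '' X = X)  -- the subshift X
    (φ : A → B)
    (n : ℕ) (μ : Fin n → Measure (ℤ → A)) [∀ i, IsProbabilityMeasure (μ i)]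
    (hinv : ∀ i, MeasurePreserving shift (μ i) (μ i))
    (hsupp : ∀ i, (μ i) Xᶜ = 0)
    (ν : Measure (ℤ → B)) [IsProbabilityMeasure ν]
    (hproj : ∀ i, (μ i).map (fun x => φ ∘ x) = ν)
    -- μhat is the relatively independent joining μ1 ⊗_ν ⋯ ⊗_ν μn on X^n:
    (μhat : Measure (Fin n → (ℤ → A))) [IsProbabilityMeasure μhat]
    (hjoin : ∀ As : Fin n → Set (ℤ → A), (∀ i, MeasurableSet (As i)) →
      ∀ g : Fin n → ((ℤ → B) → ℝ), (∀ i, Measurable (g i)) →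
        (∀ i, (fun x => g i (φ ∘ x)) =ᵐ[μ i]
          (μ i)[(As i).indicator (fun _ => (1 : ℝ))|
            MeasurableSpace.comap (fun x : ℤ → A => φ ∘ x) inferInstance]) →
        μhat (Set.univ.pi As) = ENNReal.ofReal (∫ y, ∏ i, g i y ∂ν))
    (b : B) (hb : ν {y | y 0 = b} ≠ 0)
    (hN : Nat.card {a : A // φ a = b} < n) :
    ∃ i j : Fin n, i ≠ j ∧
      0 < μhat {xhat : Fin n → (ℤ → A) | xhat i 0 = xhat j 0} ∧
      0 < (μhat.map (fun xhat : Fin n → (ℤ → A) => (xhat i, xhat j)))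
          {p : (ℤ → A) × (ℤ → A) | p.1 0 = p.2 0} :=
  stmt9_general φ n μ ν μhat hjoin b hb hN
end
end

section
/- Let $\pi: X \to Y$ be a 1-block factor map between subshifts on finite alphabets, and let $f_n(y) = \log|\pi^{-1}[y_0\cdots y_{n-1}]|$ count preimage $n$-blocks. Then for every shift-invariant measure $\mu$ on $X$ with $\pi_*\mu = \nu$ ergodic, the entropies satisfy $h(\mu) \leq h(\nu) + \lim_{n\to\infty}\frac{1}{n}\int_Y f_n \, d\nu$. -/
open MeasureTheory Filter

noncomputable section

def preimageBlocks {A B : Type*} (φ : A → B) (X : Set (ℤ → A)) (n : ℕ) (y : ℤ → B) :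
    Set (Fin n → A) :=
  {w | (∃ x ∈ X, ∀ i : Fin n, x (i : ℤ) = w i) ∧ ∀ i : Fin n, φ (w i) = y (i : ℤ)}

def fCount {A B : Type*} (φ : A → B) (X : Set (ℤ → A)) (n : ℕ) (y : ℤ → B) : ℝ :=
  Real.log ((preimageBlocks φ X n y).ncard)

def blockEntropy {A : Type*} [Fintype A] [MeasurableSpace A]
    (μ : Measure (ℤ → A)) (n : ℕ) : ℝ :=
  ∑ w : Fin n → A, Real.negMulLog (μ {x | ∀ i : Fin n, x (i : ℤ) = w i}).toReal

def KSEntropy {A : Type*} [Fintype A] [MeasurableSpace A]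
    (μ : Measure (ℤ → A)) : ℝ :=
  ⨅ n : ℕ, blockEntropy μ (n + 1) / (n + 1)

/-!
Grouping the `n`-blocks of `μ` by their image under `φ` bounds the block entropy `H_μ(n)` by
`H_ν(n)` plus the `ν`-average of the logarithm of the number of blocks of positive `μ`-mass over
each image. Since `μ` is carried by `X`, such blocks occur in `X`, so this average is at most
`∫ f_n dν`. Dividing by `n`, Fekete's lemma for the subadditive `H_ν(n)` of the shift-invariant `ν`
turns the right-hand side into `h(ν) + c`, while `h(μ)` lies below every `H_μ(n)/n`.
-/

open Finset Real

theorem negMulLog_le_sub_sub_mul_log {p r : ℝ} (hp : 0 ≤ p) (hr : 0 ≤ r) (hpr : 0 < p → 0 < r) :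
    negMulLog p ≤ r - p - p * log r := by
  rcases hp.eq_or_lt with rfl | hp
  · simpa using hr
  have hr := hpr hp
  have h := mul_le_mul_of_nonneg_left (log_le_sub_one_of_pos (div_pos hr hp)) hp.le
  rw [log_div hr.ne' hp.ne', mul_sub, mul_sub, mul_div_cancel₀ _ hp.ne'] at h
  simp only [negMulLog]
  linarith

theorem sum_negMulLog_le_negMulLog_sum_add {ι : Type*} (s : Finset ι) {p : ι → ℝ}
    (hp : ∀ i ∈ s, 0 ≤ p i) {K : ℕ} (hK : #{i ∈ s | p i ≠ 0} ≤ K) :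
    ∑ i ∈ s, negMulLog (p i) ≤ negMulLog (∑ i ∈ s, p i) + (∑ i ∈ s, p i) * log K := by
  classical
  set t := {i ∈ s | p i ≠ 0}
  have hH : ∑ i ∈ t, negMulLog (p i) = ∑ i ∈ s, negMulLog (p i) :=
    sum_filter_of_ne fun i _ h hi => h (by rw [hi, negMulLog_zero])
  have hsum : ∑ i ∈ t, p i = ∑ i ∈ s, p i := sum_filter_ne_zero s
  rw [← hsum, ← hH]
  rcases t.eq_empty_or_nonempty with ht | ht
  · simp [ht]
  have hpos : ∀ i ∈ t, 0 < p i := fun i hi =>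
    (hp i (mem_filter.1 hi).1).lt_of_ne' (mem_filter.1 hi).2
  set S := ∑ i ∈ t, p i
  have hS : 0 < S := sum_pos hpos ht
  have hk : (0 : ℝ) < #t := by exact_mod_cast ht.card_pos
  calc ∑ i ∈ t, negMulLog (p i) ≤ ∑ i ∈ t, (S / #t - p i - p i * log (S / #t)) :=
        sum_le_sum fun i hi => negMulLog_le_sub_sub_mul_log (hpos i hi).le (by positivity)
          fun _ => by positivity
    _ = negMulLog S + S * log #t := by
        rw [sum_sub_distrib, sum_sub_distrib, sum_const, ← sum_mul, log_div hS.ne' hk.ne',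
          nsmul_eq_mul, mul_div_cancel₀ _ hk.ne', negMulLog]
        ring
    _ ≤ negMulLog S + S * log K := by gcongr

theorem sum_negMulLog_le_sum_negMulLog_marginals {α β : Type*} [Fintype α] [Fintype β]
    {p : α × β → ℝ} (hp : ∀ x, 0 ≤ p x) (hp1 : ∑ x, p x = 1) :
    ∑ x, negMulLog (p x) ≤
      ∑ a, negMulLog (∑ b, p (a, b)) + ∑ b, negMulLog (∑ a, p (a, b)) := by
  set q₁ : α → ℝ := fun a => ∑ b, p (a, b)
  set q₂ : β → ℝ := fun b => ∑ a, p (a, b)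
  have hq₁ : ∑ a, q₁ a = 1 := by rw [← hp1, Fintype.sum_prod_type]
  have hq₂ : ∑ b, q₂ b = 1 := by rw [← hp1, Fintype.sum_prod_type_right]
  have hle₁ (a : α) (b : β) : p (a, b) ≤ q₁ a := single_le_sum (fun b _ => hp (a, b)) (mem_univ b)
  have hle₂ (a : α) (b : β) : p (a, b) ≤ q₂ b := single_le_sum (fun a _ => hp (a, b)) (mem_univ a)
  have hpoint (a : α) (b : β) : negMulLog (p (a, b)) ≤
      q₁ a * q₂ b - p (a, b) - p (a, b) * log (q₁ a) - p (a, b) * log (q₂ b) := by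
    rcases (hp (a, b)).eq_or_lt with h0 | h0
    · rw [← h0, negMulLog_zero]
      simp only [zero_mul, sub_zero]
      exact mul_nonneg (h0.le.trans (hle₁ a b)) (h0.le.trans (hle₂ a b))
    have h₁ := h0.trans_le (hle₁ a b)
    have h₂ := h0.trans_le (hle₂ a b)
    have := negMulLog_le_sub_sub_mul_log (hp (a, b)) (mul_pos h₁ h₂).le fun _ => mul_pos h₁ h₂
    rw [log_mul h₁.ne' h₂.ne'] at this
    linarith
  calc ∑ x, negMulLog (p x) = ∑ a, ∑ b, negMulLog (p (a, b)) := Fintype.sum_prod_type _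
    _ ≤ ∑ a, ∑ b, (q₁ a * q₂ b - p (a, b) - p (a, b) * log (q₁ a) - p (a, b) * log (q₂ b)) :=
        sum_le_sum fun a _ => sum_le_sum fun b _ => hpoint a b
    _ = ∑ a, negMulLog (q₁ a) + ∑ b, negMulLog (q₂ b) := by
        have hq₁' (a : α) : ∑ b, p (a, b) = q₁ a := rfl
        have hq₂' (b : β) : ∑ a, p (a, b) = q₂ b := rfl
        simp only [sum_sub_distrib]
        rw [sum_comm (f := fun a b => p (a, b) * log (q₂ b))]
        simp only [← mul_sum, ← sum_mul, hq₁', hq₂', hq₁, hq₂, negMulLog,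
          neg_mul, sum_neg_distrib]
        ring

section Entropy

variable {Ω Ω' α β : Type*} [MeasurableSpace Ω] [Fintype α] [Fintype β]

def entropy (κ : Measure Ω) (U : Ω → α) : ℝ :=
  ∑ a, negMulLog (κ.real (U ⁻¹' {a}))

theorem entropy_comp_equiv (κ : Measure Ω) (U : Ω → α) (e : α ≃ β) :
    entropy κ (e ∘ U) = entropy κ U :=
  (Fintype.sum_equiv e _ _ fun a => by rw [Set.preimage_comp]; congr 3; ext; simp).symm

variable [MeasurableSpace α] [MeasurableSingletonClass α]

theorem entropy_map [MeasurableSpace Ω'] (κ : Measure Ω) {f : Ω → Ω'} (hf : Measurable f)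
    {U : Ω' → α} (hU : Measurable U) : entropy (κ.map f) U = entropy κ (U ∘ f) := by
  unfold entropy
  simp_rw [map_measureReal_apply hf (hU (measurableSet_singleton _)), Set.preimage_comp]

theorem integral_comp_eq_sum (κ : Measure Ω) [IsFiniteMeasure κ] {U : Ω → α}
    (hU : Measurable U) (F : α → ℝ) : ∫ ω, F (U ω) ∂κ = ∑ a, κ.real (U ⁻¹' {a}) * F a := by
  rw [← integral_map hU.aemeasurable (Measurable.of_discrete (f := F)).aestronglyMeasurable,
    integral_fintype .of_finite]
  simp [map_measureReal_apply hU (measurableSet_singleton _)]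

theorem sum_measureReal_preimage_singleton_inter (κ : Measure Ω) [IsFiniteMeasure κ]
    {U : Ω → α} (hU : Measurable U) (S : Set Ω) :
    ∑ a, κ.real (U ⁻¹' {a} ∩ S) = κ.real S := by
  simp_rw [← measureReal_restrict_apply (hU (measurableSet_singleton _)),
    sum_measureReal_preimage_singleton (μ := κ.restrict S) univ
      fun a _ => hU (measurableSet_singleton a)]
  simp

theorem entropy_le_entropy_comp_add [DecidableEq β] (κ : Measure Ω) [IsFiniteMeasure κ]
    {U : Ω → α} (hU : Measurable U) (g : α → β) (K : β → ℕ)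
    (hK : ∀ b, #{a | g a = b ∧ κ.real (U ⁻¹' {a}) ≠ 0} ≤ K b) :
    entropy κ U ≤ entropy κ (g ∘ U) + ∑ b, κ.real ((g ∘ U) ⁻¹' {b}) * log (K b) := by
  have hfiber (b : β) : ∑ a with g a = b, κ.real (U ⁻¹' {a}) = κ.real ((g ∘ U) ⁻¹' {b}) := by
    rw [sum_measureReal_preimage_singleton _ fun a _ => hU (measurableSet_singleton a)]
    congr 1; ext; simp
  unfold entropy
  rw [← sum_fiberwise univ g, ← sum_add_distrib]
  refine sum_le_sum fun b _ => ?_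
  rw [← hfiber]
  exact sum_negMulLog_le_negMulLog_sum_add _ (fun _ _ => measureReal_nonneg)
    (by rw [filter_filter]; exact hK b)

theorem entropy_prodMk_le [MeasurableSpace β] [MeasurableSingletonClass β] (κ : Measure Ω)
    [IsProbabilityMeasure κ] {U : Ω → α} {V : Ω → β} (hU : Measurable U) (hV : Measurable V) :
    entropy κ (fun ω => (U ω, V ω)) ≤ entropy κ U + entropy κ V := by
  have hpair (a : α) (b : β) : (fun ω => (U ω, V ω)) ⁻¹' {(a, b)} = U ⁻¹' {a} ∩ V ⁻¹' {b} := by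
    ext; simp
  have hmarg₁ (a : α) :
      ∑ b, κ.real ((fun ω => (U ω, V ω)) ⁻¹' {(a, b)}) = κ.real (U ⁻¹' {a}) := by
    simp only [hpair, Set.inter_comm (U ⁻¹' _)]
    exact sum_measureReal_preimage_singleton_inter κ hV (U ⁻¹' {a})
  have hmarg₂ (b : β) :
      ∑ a, κ.real ((fun ω => (U ω, V ω)) ⁻¹' {(a, b)}) = κ.real (V ⁻¹' {b}) := by
    simp only [hpair]
    exact sum_measureReal_preimage_singleton_inter κ hU (V ⁻¹' {b})
  have htotal : ∑ x, κ.real ((fun ω => (U ω, V ω)) ⁻¹' {x}) = 1 := by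
    rw [Fintype.sum_prod_type]
    simp only [hmarg₁]
    simpa using sum_measureReal_preimage_singleton_inter κ hU Set.univ
  unfold entropy
  simpa only [hmarg₁, hmarg₂] using
    sum_negMulLog_le_sum_negMulLog_marginals (fun _ => measureReal_nonneg) htotal

end Entropy

section Shift

variable {A B : Type*}

def block (n : ℕ) (x : ℤ → A) : Fin n → A := fun i => x i

theorem measurable_block [MeasurableSpace A] (n : ℕ) : Measurable (block (A := A) n) :=
  measurable_pi_lambda _ fun i => measurable_pi_apply (i : ℤ)

theorem Measurable.comp_left {ι : Type*} [MeasurableSpace A] [MeasurableSpace B] {φ : A → B}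
    (hφ : Measurable φ) : Measurable fun x : ι → A => φ ∘ x :=
  measurable_pi_lambda _ fun i => hφ.comp (measurable_pi_apply i)

theorem measurable_shift [MeasurableSpace A] : Measurable (shift : (ℤ → A) → ℤ → A) :=
  measurable_pi_lambda _ fun i => measurable_pi_apply (i + 1)

theorem shift_iterate_apply (k : ℕ) (x : ℤ → A) (j : ℤ) : shift^[k] x j = x (j + k) := by
  induction k generalizing x with
  | zero => simp
  | succ k ih =>
    rw [Function.iterate_succ_apply, ih]
    simp only [shift, Nat.cast_succ]
    ring_nf

theorem block_add (m n : ℕ) (x : ℤ → A) :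
    block (m + n) x = Fin.append (block m x) (block n (shift^[m] x)) := by
  funext i
  refine Fin.addCases (fun j => ?_) (fun j => ?_) i
  · simp [block]
  · simp [block, shift_iterate_apply, add_comm]

variable [Fintype A] [MeasurableSpace A]

theorem blockEntropy_eq_entropy (κ : Measure (ℤ → A)) (n : ℕ) :
    blockEntropy κ n = entropy κ (block n) := by
  unfold blockEntropy entropy
  refine sum_congr rfl fun w _ => ?_
  rw [Measure.real]
  congr 3
  ext x
  simp [block, funext_iff]

theorem blockEntropy_nonneg (κ : Measure (ℤ → A)) [IsProbabilityMeasure κ] (n : ℕ) :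
    0 ≤ blockEntropy κ n :=
  sum_nonneg fun _ _ => negMulLog_nonneg measureReal_nonneg measureReal_le_one

theorem KSEntropy_le_blockEntropy_div (κ : Measure (ℤ → A)) [IsProbabilityMeasure κ] {n : ℕ}
    (hn : n ≠ 0) : KSEntropy κ ≤ blockEntropy κ n / n := by
  obtain ⟨k, rfl⟩ := Nat.exists_eq_succ_of_ne_zero hn
  have hbdd : BddBelow (Set.range fun k : ℕ => blockEntropy κ (k + 1) / (k + 1)) :=
    ⟨0, Set.forall_mem_range.2 fun k => div_nonneg (blockEntropy_nonneg κ _) (by positivity)⟩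
  simpa [KSEntropy] using ciInf_le hbdd k

def blockFiber (φ : A → B) (X : Set (ℤ → A)) (n : ℕ) (v : Fin n → B) : Set (Fin n → A) :=
  {w | (∃ x ∈ X, ∀ i : Fin n, x i = w i) ∧ ∀ i, φ (w i) = v i}

theorem card_filter_measureReal_ne_zero_le_ncard_blockFiber [DecidableEq B] (φ : A → B)
    {X : Set (ℤ → A)} {μ : Measure (ℤ → A)} (hX : μ Xᶜ = 0) {n : ℕ} (v : Fin n → B) :
    #{w | (fun i => φ (w i)) = v ∧ μ.real (block n ⁻¹' {w}) ≠ 0} ≤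
      (blockFiber φ X n v).ncard := by
  rw [← Set.ncard_coe_finset]
  refine Set.ncard_le_ncard (fun w hw => ?_) (Set.toFinite _)
  obtain ⟨hφw, hw⟩ : (fun i => φ (w i)) = v ∧ μ.real (block n ⁻¹' {w}) ≠ 0 := by simpa using hw
  have hμw : μ (block n ⁻¹' {w} ∩ X) ≠ 0 := by
    rw [measure_inter_conull hX]
    exact fun h => hw (by simp [Measure.real, h])
  obtain ⟨x, hxw, hxX⟩ := nonempty_of_measure_ne_zero hμw
  exact ⟨⟨x, hxX, fun i => congrFun hxw i⟩, fun i => congrFun hφw i⟩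

variable [MeasurableSingletonClass A]

theorem blockEntropy_add_le {ν : Measure (ℤ → A)} [IsProbabilityMeasure ν]
    (hν : MeasurePreserving shift ν ν) (m n : ℕ) :
    blockEntropy ν (m + n) ≤ blockEntropy ν m + blockEntropy ν n := by
  have hsplit : block (A := A) (m + n) =
      Fin.appendEquiv m n ∘ fun x => (block m x, block n (shift^[m] x)) :=
    funext (block_add m n)
  have hshift : entropy ν (block n ∘ shift^[m]) = entropy ν (block n) := by
    rw [← entropy_map ν (measurable_shift.iterate m) (measurable_block n), (hν.iterate m).map_eq]
  simp only [blockEntropy_eq_entropy, hsplit, entropy_comp_equiv]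
  rw [← hshift]
  exact entropy_prodMk_le ν (measurable_block m)
    ((measurable_block n).comp (measurable_shift.iterate m))

theorem tendsto_blockEntropy_div_KSEntropy {ν : Measure (ℤ → A)} [IsProbabilityMeasure ν]
    (hν : MeasurePreserving shift ν ν) :
    Tendsto (fun n : ℕ => blockEntropy ν n / n) atTop (nhds (KSEntropy ν)) := by
  have hsub : Subadditive (blockEntropy ν) := blockEntropy_add_le hν
  have hbdd : BddBelow (Set.range fun n : ℕ => blockEntropy ν n / n) :=
    ⟨0, Set.forall_mem_range.2 fun n => div_nonneg (blockEntropy_nonneg ν n) n.cast_nonneg⟩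
  have hlim := hsub.tendsto_lim hbdd
  suffices hsub.lim = KSEntropy ν by rwa [← this]
  refine le_antisymm (le_ciInf fun n => ?_) ?_
  · simpa using hsub.lim_le_div hbdd n.succ_ne_zero
  · exact ge_of_tendsto hlim
      ((eventually_ne_atTop 0).mono fun n hn => KSEntropy_le_blockEntropy_div ν hn)

theorem blockEntropy_le_blockEntropy_map_add_integral_fCount [Fintype B] [MeasurableSpace B]
    [MeasurableSingletonClass B] (φ : A → B) {X : Set (ℤ → A)}
    {μ : Measure (ℤ → A)} [IsProbabilityMeasure μ] (hX : μ Xᶜ = 0) (n : ℕ) :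
    blockEntropy μ n ≤ blockEntropy (μ.map fun x => φ ∘ x) n +
      ∫ y, fCount φ X n y ∂(μ.map fun x => φ ∘ x) := by
  classical
  have hΦ : Measurable fun x : ℤ → A => φ ∘ x := Measurable.of_discrete.comp_left
  have hfCount : fCount φ X n = fun y => log (blockFiber φ X n (block n y)).ncard := rfl
  rw [blockEntropy_eq_entropy, blockEntropy_eq_entropy, entropy_map μ hΦ (measurable_block n),
    hfCount, integral_comp_eq_sum _ (measurable_block n) fun v => log (blockFiber φ X n v).ncard]
  simp_rw [map_measureReal_apply hΦ (measurable_block n (measurableSet_singleton _))]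
  exact entropy_le_entropy_comp_add μ (measurable_block n) (fun w i => φ (w i)) _
    (card_filter_measureReal_ne_zero_le_ncard_blockFiber φ hX)

end Shift

theorem stmt17_general {A B : Type*} [Fintype A] [Fintype B]
    [MeasurableSpace A] [MeasurableSingletonClass A]
    [MeasurableSpace B] [MeasurableSingletonClass B]
    (φ : A → B) (X : Set (ℤ → A))
    (μ : Measure (ℤ → A)) [IsProbabilityMeasure μ]
    (hμinv : MeasurePreserving shift μ μ) (hμsupp : μ Xᶜ = 0)
    (ν : Measure (ℤ → B)) (hproj : μ.map (fun x => φ ∘ x) = ν)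
    (c : ℝ)
    (hc : Tendsto (fun n : ℕ => (∫ y, fCount φ X n y ∂ν) / n) atTop (nhds c)) :
    KSEntropy μ ≤ KSEntropy ν + c := by
  have hΦm : Measurable fun x : ℤ → A => φ ∘ x := Measurable.of_discrete.comp_left
  have hΦ : MeasurePreserving (fun x : ℤ → A => φ ∘ x) μ ν := hproj ▸ hΦm.measurePreserving μ
  have : IsProbabilityMeasure ν := hproj ▸ Measure.isProbabilityMeasure_map hΦm.aemeasurable
  have hν : MeasurePreserving shift ν ν := hΦ.of_semiconj hμinv (fun _ => rfl) measurable_shift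
  refine ge_of_tendsto ((tendsto_blockEntropy_div_KSEntropy hν).add hc)
    ((eventually_ne_atTop 0).mono fun n hn => ?_)
  calc KSEntropy μ ≤ blockEntropy μ n / n := KSEntropy_le_blockEntropy_div μ hn
    _ ≤ (blockEntropy ν n + ∫ y, fCount φ X n y ∂ν) / n := by
        gcongr
        exact hproj ▸ blockEntropy_le_blockEntropy_map_add_integral_fCount φ hμsupp n
    _ = _ := add_div _ _ _

theorem stmt17 {A B : Type*} [Fintype A] [Fintype B]
    [MeasurableSpace A] [MeasurableSingletonClass A]
    [MeasurableSpace B] [MeasurableSingletonClass B]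
    (φ : A → B) (X : Set (ℤ → A)) (hXinv : shift '' X = X)
    (μ : Measure (ℤ → A)) [IsProbabilityMeasure μ]
    (hμinv : MeasurePreserving shift μ μ) (hμsupp : μ Xᶜ = 0)
    (ν : Measure (ℤ → B)) (hproj : μ.map (fun x => φ ∘ x) = ν)
    (hνerg : Ergodic shift ν)
    (c : ℝ)
    (hc : Tendsto (fun n : ℕ => (∫ y, fCount φ X n y ∂ν) / n) atTop (nhds c)) :
    KSEntropy μ ≤ KSEntropy ν + c :=
  stmt17_general φ X μ hμinv hμsupp ν hproj c hc

end
end
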